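/- (Optimal substructure used in Theorem 5: dropping a middle dominance.) Let A, B be chains and δ > 0, and let O[i,j] and X[i,j] be as in the minimum-length one-sided simplification DP. Then X[i+1, j+1] ≤ X[i+1, j] for all valid i, j; that is, any simplification of a suffix of A that matches B[j..n] within δ also yields (after the coupling advances in B) a matching of B[j+1..n], so the option of advancing only in A may be disregarded in the recurrence. -/

import Mathlib

/-- One step of a monotone coupling on 0-based index pairs:
each index advances by 0 or 1, and at least one advances. -/
def StepN (p q : ℕ × ℕ) : Prop :=
  p.1 ≤ q.1 ∧ q.1 ≤ p.1 + 1 ∧ p.2 ≤ q.2 ∧ q.2 ≤ p.2 + 1 ∧ p ≠ q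

/-- A coupling of sequences of lengths `la` and `lb`: starts at `(0,0)`,
ends at `(la-1, lb-1)`, and advances by `StepN`. -/
def IsCouplingL (la lb : ℕ) (c : List (ℕ × ℕ)) : Prop :=
  c.head? = some (0, 0) ∧ c.getLast? = some (la - 1, lb - 1) ∧ c.Chain' StepN

/-- The maximal pointwise distance along a coupling. -/
noncomputable def costL {X : Type*} [MetricSpace X] [Inhabited X]
    (P Q : List X) (c : List (ℕ × ℕ)) : ℝ :=
  (c.map (fun p => dist (P.getD p.1 default) (Q.getD p.2 default))).foldr max 0

/-- The discrete Fréchet distance of two finite sequences (lists) of points. -/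
noncomputable def dFL {X : Type*} [MetricSpace X] [Inhabited X] (P Q : List X) : ℝ :=
  sInf { r | ∃ c, IsCouplingL P.length Q.length c ∧ costL P Q c = r }

/-- `OVal A B δ i j` (1-based `i`, `j`): the minimum length of a subsequence of
the suffix `A[i..m]` beginning at `a_i` whose discrete Fréchet distance to the
suffix `B[j..n]` is at most `δ` (and `⊤` if none exists). -/
noncomputable def OVal {X : Type*} [MetricSpace X] [Inhabited X]
    (A B : List X) (δ : ℝ) (i j : ℕ) : ℕ∞ :=
  sInf {z : ℕ∞ | ∃ S : List X,
    S.Sublist (A.drop (i - 1)) ∧ S ≠ [] ∧ S.head? = (A.drop (i - 1)).head? ∧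
    dFL S (B.drop (j - 1)) ≤ δ ∧ z = (S.length : ℕ∞)}

/-- `XVal A B δ i j = min_{i' ≥ i} OVal A B δ i' j` (with `i'` ranging over
`i, ..., m`). -/
noncomputable def XVal {X : Type*} [MetricSpace X] [Inhabited X]
    (A B : List X) (δ : ℝ) (i j : ℕ) : ℕ∞ :=
  (Finset.Icc i A.length).inf (fun i' => OVal A B δ i' j)

/-!
Let `S` be a subsequence of `A[i'..m]` (with `i' > i`) witnessing `O[i', j]`. Since the infimum
defining the discrete Fréchet distance is attained, `S` has a coupling with `B[j..n]` of cost at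
most `δ`. Cut it at its first pair whose `B`-index is `j + 1`, say `(s_k, b_{j+1})`: the rest is a
coupling of `S[k..]` with `B[j+1..n]` of cost at most `δ`, and `S[k..]` is a subsequence of `A`
beginning at some `a_{i''}` with `i'' ≥ i'`. Hence `X[i+1, j+1] ≤ O[i'', j+1] ≤ |S[k..]| ≤ |S|`.
-/

theorem List.foldr_max_eq_or_mem {α : Type*} [LinearOrder α] (b : α) :
    ∀ l : List α, l.foldr max b = b ∨ l.foldr max b ∈ l
  | [] => .inl rfl
  | x :: l => by
    rcases max_choice x (l.foldr max b) with h | h <;> rw [foldr_cons, h]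
    · exact .inr mem_cons_self
    · exact (foldr_max_eq_or_mem b l).imp_right (mem_cons_of_mem x)

theorem List.foldr_max_le_iff {α : Type*} [LinearOrder α] {a b : α} :
    ∀ {l : List α}, l.foldr max b ≤ a ↔ b ≤ a ∧ ∀ x ∈ l, x ≤ a
  | [] => by simp
  | x :: l => by simp [foldr_max_le_iff, and_left_comm]

theorem List.getD_mem_cons {α : Type*} (l : List α) (n : ℕ) (d : α) :
    l.getD n d ∈ d :: l := by
  rw [getD_eq_getElem?_getD]
  cases h : l[n]? with
  | none => exact mem_cons_self
  | some x => exact mem_cons_of_mem _ (mem_of_getElem? h)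

theorem List.getD_drop {α : Type*} (l : List α) (k n : ℕ) (d : α) :
    (l.drop k).getD n d = l.getD (k + n) d := by
  simp only [getD_eq_getElem?_getD, getElem?_drop]

theorem List.exists_sublist_drop_head?_eq {α : Type*} {l t : List α} (h : t.Sublist l)
    (ht : t ≠ []) :
    ∃ p < l.length, t.Sublist (l.drop p) ∧ t.head? = (l.drop p).head? := by
  induction h with
  | slnil => exact absurd rfl ht
  | cons a _ ih =>
    obtain ⟨p, hp, hs, hh⟩ := ih ht
    exact ⟨p + 1, by simpa using hp, by simpa using hs, by simpa using hh⟩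
  | cons_cons a h => exact ⟨0, by simp, by simpa using h.cons_cons a, by simp⟩

section Coupling

variable {X : Type*} [MetricSpace X] [Inhabited X]

theorem StepN.le {p q : ℕ × ℕ} (h : StepN p q) : p ≤ q := Prod.le_def.2 ⟨h.1, h.2.2.1⟩

theorem head_le_of_isChain_stepN {c : List (ℕ × ℕ)} (hc : c.IsChain StepN) {a p : ℕ × ℕ}
    (ha : c.head? = some a) (hp : p ∈ c) : a ≤ p := by
  obtain ⟨t, rfl⟩ : ∃ t, c = a :: t := List.head?_eq_some_iff.1 ha
  rcases List.mem_cons.1 hp with rfl | hp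
  · exact le_rfl
  · exact (hc.imp fun _ _ => StepN.le).rel_cons hp

theorem IsCouplingL.concat {la lb : ℕ} {c : List (ℕ × ℕ)} (hc : IsCouplingL la lb c)
    {q : ℕ × ℕ} (hq : StepN (la - 1, lb - 1) q) :
    IsCouplingL (q.1 + 1) (q.2 + 1) (c ++ [q]) := by
  obtain ⟨hh, hl, hch⟩ := hc
  refine ⟨by simp [List.head?_append, hh], by simp, hch.append (.singleton q) ?_⟩
  simp_all

theorem exists_isCouplingL (a b : ℕ) : ∃ c, IsCouplingL (a + 1) (b + 1) c := by
  induction b with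
  | zero =>
    induction a with
    | zero => exact ⟨[(0, 0)], rfl, rfl, .singleton _⟩
    | succ a ih =>
      obtain ⟨c, hc⟩ := ih
      exact ⟨_, hc.concat (q := (a + 1, 0)) (by simp [StepN])⟩
  | succ b ih =>
    obtain ⟨c, hc⟩ := ih
    exact ⟨_, hc.concat (q := (a, b + 1)) (by simp [StepN])⟩

theorem isCouplingL_map_sub {c : List (ℕ × ℕ)} (hc : c.IsChain StepN) {k l x y : ℕ}
    (hh : c.head? = some (k, l)) (hl : c.getLast? = some (x, y)) :
    IsCouplingL (x + 1 - k) (y + 1 - l) (c.map fun p => (p.1 - k, p.2 - l)) := by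
  refine ⟨by simp [hh], by simp [hl]; omega, ?_⟩
  refine (List.isChain_map _).2 (hc.imp_of_mem_imp fun p q hp hq hpq => ?_)
  have hkp := Prod.le_def.1 (head_le_of_isChain_stepN hc hh hp)
  have hkq := Prod.le_def.1 (head_le_of_isChain_stepN hc hh hq)
  obtain ⟨h1, h2, h3, h4, h5⟩ := hpq
  simp only [StepN, ne_eq, Prod.ext_iff, not_and] at h5 ⊢
  omega

theorem costL_le_iff {P Q : List X} {c : List (ℕ × ℕ)} {δ : ℝ} :
    costL P Q c ≤ δ ↔ 0 ≤ δ ∧ ∀ p ∈ c, dist (P.getD p.1 default) (Q.getD p.2 default) ≤ δ := by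
  simp only [costL, List.foldr_max_le_iff, List.forall_mem_map]

theorem costL_nonneg (P Q : List X) (c : List (ℕ × ℕ)) : 0 ≤ costL P Q c :=
  (costL_le_iff.1 le_rfl).1

theorem finite_range_costL (P Q : List X) : (Set.range (costL P Q)).Finite := by
  refine (((default :: P).finite_toSet.image2 dist (default :: Q).finite_toSet).insert 0).subset ?_
  rintro _ ⟨c, rfl⟩
  unfold costL
  rcases List.foldr_max_eq_or_mem (0 : ℝ) (c.map _) with h | h
  · exact .inl h
  · obtain ⟨p, -, hp⟩ := List.mem_map.1 h
    exact .inr ⟨_, P.getD_mem_cons p.1 default, _, Q.getD_mem_cons p.2 default, hp⟩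

/-- The infimum defining `dFL` is attained, since a coupling's cost is one of finitely many
distances (for empty `P` or `Q` there is no coupling, and `dFL` is the junk value `sInf ∅ = 0`). -/
theorem dFL_le_iff {P Q : List X} (hP : P ≠ []) (hQ : Q ≠ []) {δ : ℝ} :
    dFL P Q ≤ δ ↔ ∃ c, IsCouplingL P.length Q.length c ∧ costL P Q c ≤ δ := by
  constructor
  · intro h
    obtain ⟨a, ha⟩ := Nat.exists_eq_succ_of_ne_zero (List.length_pos_iff.2 hP).ne'
    obtain ⟨b, hb⟩ := Nat.exists_eq_succ_of_ne_zero (List.length_pos_iff.2 hQ).ne'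
    obtain ⟨c, hc⟩ := exists_isCouplingL a b
    have hne : {r | ∃ c, IsCouplingL P.length Q.length c ∧ costL P Q c = r}.Nonempty :=
      ⟨_, c, ha ▸ hb ▸ hc, rfl⟩
    obtain ⟨c', hc', hcost⟩ := hne.csInf_mem <|
      (finite_range_costL P Q).subset (by rintro _ ⟨c, -, rfl⟩; exact ⟨c, rfl⟩)
    exact ⟨c', hc', hcost.symm ▸ h⟩
  · rintro ⟨c, hc, hcost⟩
    have hbdd : BddBelow {r | ∃ c, IsCouplingL P.length Q.length c ∧ costL P Q c = r} :=
      ⟨0, by rintro _ ⟨c, -, rfl⟩; exact costL_nonneg P Q c⟩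
    exact (csInf_le hbdd ⟨c, hc, rfl⟩).trans hcost

theorem exists_suffix_head?_eq_one {x y : ℕ} (hy : y ≠ 0) :
    ∀ {c : List (ℕ × ℕ)}, c.IsChain StepN → (∀ p ∈ c.head?, p.2 = 0) →
      c.getLast? = some (x, y) → ∃ c' k, c' <:+ c ∧ c'.head? = some (k, 1) ∧
        c'.getLast? = some (x, y)
  | [], _, _, hl => by simp at hl
  | [p], _, h0, hl => by simp_all
  | p :: q :: t, hc, h0, hl => by
    rw [List.isChain_cons_cons] at hc
    rw [List.getLast?_cons_cons] at hl
    have hp : p.2 = 0 := h0 p rfl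
    have hq : q.2 ≤ 1 := by have := hc.1.2.2.2.1; omega
    rcases Nat.lt_or_eq_of_le hq with hq | hq
    · have hq0 : ∀ r ∈ (q :: t).head?, r.2 = 0 := fun r hr => by
        obtain rfl := Option.some_inj.1 hr; omega
      obtain ⟨c', k, hs, hh, hl'⟩ := exists_suffix_head?_eq_one hy hc.2 hq0 hl
      exact ⟨c', k, hs.trans (List.suffix_cons p _), hh, hl'⟩
    · exact ⟨q :: t, q.1, List.suffix_cons p _, by simp [← hq], hl⟩

/-- A coupling within `δ` of `P` with `Q`, once it first advances in `Q`, restricts to a coupling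
within `δ` of a suffix of `P` with `Q.drop 1`. -/
theorem exists_dFL_drop_drop_one_le {P Q : List X} (hP : P ≠ []) (hQ : 2 ≤ Q.length) {δ : ℝ}
    (h : dFL P Q ≤ δ) : ∃ k < P.length, dFL (P.drop k) (Q.drop 1) ≤ δ := by
  have hQ' : Q ≠ [] := List.length_pos_iff.1 (by omega)
  obtain ⟨c, ⟨hh, hl, hch⟩, hcost⟩ := (dFL_le_iff hP hQ').1 h
  obtain ⟨c', k, hs, hh', hl'⟩ :=
    exists_suffix_head?_eq_one (by omega) hch (by simp [hh]) hl
  have hk : k ≤ P.length - 1 :=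
    (Prod.le_def.1 (head_le_of_isChain_stepN (hch.suffix hs) hh' (List.mem_of_getLast? hl'))).1
  have hP' := List.length_pos_iff.2 hP
  refine ⟨k, by omega, (dFL_le_iff ?_ ?_).2
    ⟨c'.map fun p => (p.1 - k, p.2 - 1), ?_, costL_le_iff.2 ⟨(costL_le_iff.1 hcost).1, ?_⟩⟩⟩
  · exact List.length_pos_iff.1 (by simp; omega)
  · exact List.length_pos_iff.1 (by simp; omega)
  · convert isCouplingL_map_sub (hch.suffix hs) hh' hl' using 1 <;> simp; omega
  · simp only [List.mem_map, forall_exists_index, and_imp]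
    rintro _ p hp rfl
    have hkp := Prod.le_def.1 (head_le_of_isChain_stepN (hch.suffix hs) hh' hp)
    rw [List.getD_drop, List.getD_drop, Nat.add_sub_cancel' hkp.1, Nat.add_sub_cancel' hkp.2]
    exact (costL_le_iff.1 hcost).2 p (hs.subset hp)

end Coupling

theorem XVal_le_length_of_sublist {X : Type*} [MetricSpace X] [Inhabited X]
    {A B T : List X} {δ : ℝ} {i j : ℕ} (hi : 1 ≤ i) (hT : T.Sublist (A.drop (i - 1)))
    (hne : T ≠ []) (hd : dFL T (B.drop (j - 1)) ≤ δ) : XVal A B δ i j ≤ T.length := by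
  obtain ⟨p, hp, hs, hh⟩ := List.exists_sublist_drop_head?_eq hT hne
  rw [List.drop_drop] at hs hh
  rw [List.length_drop] at hp
  have hidx : i + p - 1 = i - 1 + p := by omega
  calc XVal A B δ i j ≤ OVal A B δ (i + p) j :=
        Finset.inf_le (Finset.mem_Icc.2 ⟨by omega, by omega⟩)
    _ ≤ T.length := sInf_le ⟨T, by rwa [hidx], hne, by rwa [hidx], hd, rfl⟩

theorem one_sided_dp_dominance_general {X : Type*} [MetricSpace X] [Inhabited X]
    (A B : List X) (δ : ℝ) :
    ∀ i j, 1 ≤ j → j < B.length →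
      XVal A B δ (i + 1) (j + 1) ≤ XVal A B δ (i + 1) j := by
  intro i j hj hjB
  refine Finset.le_inf fun i' hi' => le_sInf ?_
  rintro _ ⟨S, hS, hSne, -, hdF, rfl⟩
  obtain ⟨k, hk, hdF'⟩ := exists_dFL_drop_drop_one_le hSne (by simp; omega) hdF
  rw [List.drop_drop, show j - 1 + 1 = j + 1 - 1 by omega] at hdF'
  have hsub : (S.drop k).Sublist (A.drop (i + 1 - 1)) :=
    ((S.drop_sublist k).trans hS).trans (A.drop_sublist_drop_left (by simp at hi'; omega))
  calc XVal A B δ (i + 1) (j + 1) ≤ (S.drop k).length :=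
        XVal_le_length_of_sublist (by omega) hsub (by simpa using hk) hdF'
    _ ≤ S.length := by simp

/-- Optimal substructure: `X[i+1, j+1] ≤ X[i+1, j]`, i.e. advancing the index
of `B` can only decrease the minimum over `i' ≥ i+1` of `O[i', ·]`. -/
theorem one_sided_dp_dominance {X : Type*} [MetricSpace X] [Inhabited X]
    (A B : List X) (hA : A ≠ []) (hB : B ≠ []) (δ : ℝ) (hδ : 0 < δ) :
    ∀ i j, 1 ≤ j → j < B.length →
      XVal A B δ (i + 1) (j + 1) ≤ XVal A B δ (i + 1) j :=
  one_sided_dp_dominance_general A B δ
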